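/- arXiv:2410.08702 — 8 statements merged into one kernel-verified Lean document; each statement's English description precedes it below -/
import Mathlib

section
/- A Frobenius monoidal functor F : D ⥤ C sends Frobenius algebras in D to Frobenius algebras in C: if (X, m, u, Δ, ε) is a Frobenius algebra in D, then F(X) is a Frobenius algebra in C with multiplication F(m) ∘ lax_{X,X}, unit F(u) ∘ lax₀, comultiplication oplax_{X,X} ∘ F(Δ), and counit oplax₀ ∘ F(ε). -/
open CategoryTheory MonoidalCategory

universe v₁ v₂ v₃ u₁ u₂ u₃

/-- The data of a functor equipped with both a lax and an oplax monoidal structure. -/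
structure FrobData (D : Type u₁) [Category.{v₁} D] [MonoidalCategory D]
    (C : Type u₂) [Category.{v₂} C] [MonoidalCategory C] where
  F : D ⥤ C
  lax : ∀ X Y : D, F.obj X ⊗ F.obj Y ⟶ F.obj (X ⊗ Y)
  lax₀ : 𝟙_ C ⟶ F.obj (𝟙_ D)
  oplax : ∀ X Y : D, F.obj (X ⊗ Y) ⟶ F.obj X ⊗ F.obj Y
  oplax₀ : F.obj (𝟙_ D) ⟶ 𝟙_ C

variable {D : Type u₁} [Category.{v₁} D] [MonoidalCategory D]
variable {C : Type u₂} [Category.{v₂} C] [MonoidalCategory C]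

/-- The axioms of a lax monoidal structure. -/
def FrobData.IsLax (d : FrobData D C) : Prop :=
  (∀ {X Y X' Y' : D} (f : X ⟶ X') (g : Y ⟶ Y'),
    (d.F.map f ⊗ₘ d.F.map g) ≫ d.lax X' Y' = d.lax X Y ≫ d.F.map (f ⊗ₘ g)) ∧
  (∀ X Y Z : D,
    (d.lax X Y ▷ d.F.obj Z) ≫ d.lax (X ⊗ Y) Z ≫ d.F.map (α_ X Y Z).hom =
      (α_ (d.F.obj X) (d.F.obj Y) (d.F.obj Z)).hom ≫ (d.F.obj X ◁ d.lax Y Z) ≫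
        d.lax X (Y ⊗ Z)) ∧
  (∀ X : D,
    (d.lax₀ ▷ d.F.obj X) ≫ d.lax (𝟙_ D) X ≫ d.F.map (λ_ X).hom = (λ_ (d.F.obj X)).hom) ∧
  (∀ X : D,
    (d.F.obj X ◁ d.lax₀) ≫ d.lax X (𝟙_ D) ≫ d.F.map (ρ_ X).hom = (ρ_ (d.F.obj X)).hom)

/-- The axioms of an oplax monoidal structure. -/
def FrobData.IsOplax (d : FrobData D C) : Prop :=
  (∀ {X Y X' Y' : D} (f : X ⟶ X') (g : Y ⟶ Y'),
    d.F.map (f ⊗ₘ g) ≫ d.oplax X' Y' = d.oplax X Y ≫ (d.F.map f ⊗ₘ d.F.map g)) ∧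
  (∀ X Y Z : D,
    d.oplax (X ⊗ Y) Z ≫ (d.oplax X Y ▷ d.F.obj Z) ≫
        (α_ (d.F.obj X) (d.F.obj Y) (d.F.obj Z)).hom =
      d.F.map (α_ X Y Z).hom ≫ d.oplax X (Y ⊗ Z) ≫ (d.F.obj X ◁ d.oplax Y Z)) ∧
  (∀ X : D,
    d.oplax (𝟙_ D) X ≫ (d.oplax₀ ▷ d.F.obj X) ≫ (λ_ (d.F.obj X)).hom = d.F.map (λ_ X).hom) ∧
  (∀ X : D,
    d.oplax X (𝟙_ D) ≫ (d.F.obj X ◁ d.oplax₀) ≫ (ρ_ (d.F.obj X)).hom = d.F.map (ρ_ X).hom)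

/-- The two Frobenius compatibility conditions. -/
def FrobData.IsFrobenius (d : FrobData D C) : Prop :=
  (∀ X Y Z : D,
    (d.F.obj X ◁ d.oplax Y Z) ≫ (α_ (d.F.obj X) (d.F.obj Y) (d.F.obj Z)).inv ≫
        (d.lax X Y ▷ d.F.obj Z) =
      d.lax X (Y ⊗ Z) ≫ d.F.map (α_ X Y Z).inv ≫ d.oplax (X ⊗ Y) Z) ∧
  (∀ X Y Z : D,
    (d.oplax X Y ▷ d.F.obj Z) ≫ (α_ (d.F.obj X) (d.F.obj Y) (d.F.obj Z)).hom ≫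
        (d.F.obj X ◁ d.lax Y Z) =
      d.lax (X ⊗ Y) Z ≫ d.F.map (α_ X Y Z).hom ≫ d.oplax X (Y ⊗ Z))
/-- The data of an object with both an algebra and a coalgebra structure. -/
structure AlgCoalgData (C : Type u₂) [Category.{v₂} C] [MonoidalCategory C] where
  X : C
  mul : X ⊗ X ⟶ X
  one : 𝟙_ C ⟶ X
  comul : X ⟶ X ⊗ X
  counit : X ⟶ 𝟙_ C

/-- The axioms of a Frobenius algebra: associativity, unitality, coassociativity,
counitality and the two Frobenius compatibility conditions. -/
def AlgCoalgData.IsFrobeniusAlgebra (a : AlgCoalgData C) : Prop :=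
  ((a.mul ▷ a.X) ≫ a.mul = (α_ a.X a.X a.X).hom ≫ (a.X ◁ a.mul) ≫ a.mul) ∧
  ((a.one ▷ a.X) ≫ a.mul = (λ_ a.X).hom) ∧
  ((a.X ◁ a.one) ≫ a.mul = (ρ_ a.X).hom) ∧
  (a.comul ≫ (a.comul ▷ a.X) ≫ (α_ a.X a.X a.X).hom = a.comul ≫ (a.X ◁ a.comul)) ∧
  (a.comul ≫ (a.counit ▷ a.X) ≫ (λ_ a.X).hom = 𝟙 a.X) ∧
  (a.comul ≫ (a.X ◁ a.counit) ≫ (ρ_ a.X).hom = 𝟙 a.X) ∧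
  (a.mul ≫ a.comul = (a.X ◁ a.comul) ≫ (α_ a.X a.X a.X).inv ≫ (a.mul ▷ a.X)) ∧
  (a.mul ≫ a.comul = (a.comul ▷ a.X) ≫ (α_ a.X a.X a.X).hom ≫ (a.X ◁ a.mul))

/-! Through its lax structure `F` is a lax monoidal functor, so it carries the monoid
`(X, m, u)` to a monoid; dually the oplax structure carries the comonoid `(X, Δ, ε)` to a
comonoid. The Frobenius laws of `F X` are the only ones mixing the two structures: once
naturality of `lax` and `oplax` has moved `F m` and `F Δ` to the outside, what remains is
exactly a Frobenius compatibility condition of `F`. -/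

namespace FrobData

variable {d : FrobData D C}

theorem IsLax.lax_natural_left (hl : d.IsLax) {X X' : D} (f : X ⟶ X') (Y : D) :
    (d.F.map f ▷ d.F.obj Y) ≫ d.lax X' Y = d.lax X Y ≫ d.F.map (f ▷ Y) := by
  simpa using hl.1 f (𝟙 Y)

theorem IsLax.lax_natural_right (hl : d.IsLax) {Y Y' : D} (X : D) (g : Y ⟶ Y') :
    (d.F.obj X ◁ d.F.map g) ≫ d.lax X Y' = d.lax X Y ≫ d.F.map (X ◁ g) := by
  simpa using hl.1 (𝟙 X) g

theorem IsOplax.oplax_natural_left (ho : d.IsOplax) {X X' : D} (f : X ⟶ X') (Y : D) :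
    d.oplax X Y ≫ (d.F.map f ▷ d.F.obj Y) = d.F.map (f ▷ Y) ≫ d.oplax X' Y := by
  simpa using (ho.1 f (𝟙 Y)).symm

theorem IsOplax.oplax_natural_right (ho : d.IsOplax) {Y Y' : D} (X : D) (g : Y ⟶ Y') :
    d.oplax X Y ≫ (d.F.obj X ◁ d.F.map g) = d.F.map (X ◁ g) ≫ d.oplax X Y' := by
  simpa using (ho.1 (𝟙 X) g).symm

abbrev IsLax.toLaxMonoidal (hl : d.IsLax) : d.F.LaxMonoidal where
  ε := d.lax₀
  μ := d.lax
  μ_natural_left := hl.lax_natural_left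
  μ_natural_right := hl.lax_natural_right
  associativity := hl.2.1
  left_unitality X := (hl.2.2.1 X).symm
  right_unitality X := (hl.2.2.2 X).symm

abbrev IsOplax.toOplaxMonoidal (ho : d.IsOplax) : d.F.OplaxMonoidal where
  η := d.oplax₀
  δ := d.oplax
  δ_natural_left := ho.oplax_natural_left
  δ_natural_right := ho.oplax_natural_right
  oplax_associativity := ho.2.1
  oplax_left_unitality X := by
    rw [← cancel_mono (λ_ _).hom]
    simp [ho.2.2.1 X]
  oplax_right_unitality X := by
    rw [← cancel_mono (ρ_ _).hom]
    simp [ho.2.2.2 X]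

theorem IsFrobenius.map_comp_eq_whiskerLeft_comp_whiskerRight (hf : d.IsFrobenius)
    (hl : d.IsLax) (ho : d.IsOplax) {X Y Y' Z V W : D} {m : X ⊗ Y' ⟶ V} {c : V ⟶ W ⊗ Z}
    {g : Y' ⟶ Y ⊗ Z} {f : X ⊗ Y ⟶ W} (h : m ≫ c = (X ◁ g) ≫ (α_ X Y Z).inv ≫ (f ▷ Z)) :
    (d.lax X Y' ≫ d.F.map m) ≫ d.F.map c ≫ d.oplax W Z =
      (d.F.obj X ◁ (d.F.map g ≫ d.oplax Y Z)) ≫ (α_ _ _ _).inv ≫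
        ((d.lax X Y ≫ d.F.map f) ▷ d.F.obj Z) :=
  calc (d.lax X Y' ≫ d.F.map m) ≫ d.F.map c ≫ d.oplax W Z
      = d.lax X Y' ≫ d.F.map (X ◁ g) ≫ d.F.map (α_ X Y Z).inv ≫ d.F.map (f ▷ Z) ≫
          d.oplax W Z := by rw [Category.assoc, ← Functor.map_comp_assoc, h]; simp
    _ = (d.F.obj X ◁ d.F.map g) ≫ (d.lax X (Y ⊗ Z) ≫ d.F.map (α_ X Y Z).inv ≫
          d.oplax (X ⊗ Y) Z) ≫ (d.F.map f ▷ d.F.obj Z) := by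
        simp only [Category.assoc]
        rw [← ho.oplax_natural_left, reassoc_of% hl.lax_natural_right]
    _ = (d.F.obj X ◁ d.F.map g) ≫ ((d.F.obj X ◁ d.oplax Y Z) ≫ (α_ _ _ _).inv ≫
          (d.lax X Y ▷ d.F.obj Z)) ≫ (d.F.map f ▷ d.F.obj Z) := by rw [hf.1]
    _ = _ := by simp

theorem IsFrobenius.map_comp_eq_whiskerRight_comp_whiskerLeft (hf : d.IsFrobenius)
    (hl : d.IsLax) (ho : d.IsOplax) {X X' Y Z V W : D} {m : X' ⊗ Z ⟶ V} {c : V ⟶ X ⊗ W}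
    {g : X' ⟶ X ⊗ Y} {f : Y ⊗ Z ⟶ W} (h : m ≫ c = (g ▷ Z) ≫ (α_ X Y Z).hom ≫ (X ◁ f)) :
    (d.lax X' Z ≫ d.F.map m) ≫ d.F.map c ≫ d.oplax X W =
      ((d.F.map g ≫ d.oplax X Y) ▷ d.F.obj Z) ≫ (α_ _ _ _).hom ≫
        (d.F.obj X ◁ (d.lax Y Z ≫ d.F.map f)) :=
  calc (d.lax X' Z ≫ d.F.map m) ≫ d.F.map c ≫ d.oplax X W
      = d.lax X' Z ≫ d.F.map (g ▷ Z) ≫ d.F.map (α_ X Y Z).hom ≫ d.F.map (X ◁ f) ≫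
          d.oplax X W := by rw [Category.assoc, ← Functor.map_comp_assoc, h]; simp
    _ = (d.F.map g ▷ d.F.obj Z) ≫ (d.lax (X ⊗ Y) Z ≫ d.F.map (α_ X Y Z).hom ≫
          d.oplax X (Y ⊗ Z)) ≫ (d.F.obj X ◁ d.F.map f) := by
        simp only [Category.assoc]
        rw [← ho.oplax_natural_right, reassoc_of% hl.lax_natural_left]
    _ = (d.F.map g ▷ d.F.obj Z) ≫ ((d.oplax X Y ▷ d.F.obj Z) ≫ (α_ _ _ _).hom ≫
          (d.F.obj X ◁ d.lax Y Z)) ≫ (d.F.obj X ◁ d.F.map f) := by rw [hf.2]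
    _ = _ := by simp

end FrobData

namespace AlgCoalgData

open MonObj ComonObj

variable {a : AlgCoalgData C}

abbrev IsFrobeniusAlgebra.monObj (ha : a.IsFrobeniusAlgebra) : MonObj a.X where
  one := a.one
  mul := a.mul
  one_mul := ha.2.1
  mul_one := ha.2.2.1
  mul_assoc := ha.1

abbrev IsFrobeniusAlgebra.comonObj (ha : a.IsFrobeniusAlgebra) : ComonObj a.X where
  counit := a.counit
  comul := a.comul
  counit_comul := by rw [← cancel_mono (λ_ _).hom]; simpa using ha.2.2.2.2.1
  comul_counit := by rw [← cancel_mono (ρ_ _).hom]; simpa using ha.2.2.2.2.2.1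
  comul_assoc := ha.2.2.2.1.symm

theorem isFrobeniusAlgebra_of_monObj_comonObj {M : C} [MonObj M] [ComonObj M]
    (h₁ : μ ≫ Δ = (M ◁ Δ) ≫ (α_ M M M).inv ≫ (μ ▷ M))
    (h₂ : μ ≫ Δ = (Δ ▷ M) ≫ (α_ M M M).hom ≫ (M ◁ μ)) :
    IsFrobeniusAlgebra ⟨M, μ, η, Δ, ε⟩ :=
  ⟨MonObj.mul_assoc M, MonObj.one_mul M, MonObj.mul_one M, (ComonObj.comul_assoc M).symm,
    by simp, by simp, h₁, h₂⟩

end AlgCoalgData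

/-- a Frobenius monoidal functor sends Frobenius algebras to Frobenius algebras. -/
theorem frobenius_monoidal_functor_preserves_frobenius_algebras
    (d : FrobData D C) (hl : d.IsLax) (ho : d.IsOplax) (hf : d.IsFrobenius)
    (a : AlgCoalgData D) (ha : a.IsFrobeniusAlgebra) :
    AlgCoalgData.IsFrobeniusAlgebra
      { X := d.F.obj a.X
        mul := d.lax a.X a.X ≫ d.F.map a.mul
        one := d.lax₀ ≫ d.F.map a.one
        comul := d.F.map a.comul ≫ d.oplax a.X a.X
        counit := d.F.map a.counit ≫ d.oplax₀ } := by
  let := hl.toLaxMonoidal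
  let := ho.toOplaxMonoidal
  let := ha.monObj
  let := ha.comonObj
  let := Functor.monObjObj (F := d.F) a.X
  let := Functor.obj.instComonObj a.X d.F
  exact AlgCoalgData.isFrobeniusAlgebra_of_monObj_comonObj
    (hf.map_comp_eq_whiskerLeft_comp_whiskerRight hl ho ha.2.2.2.2.2.2.1)
    (hf.map_comp_eq_whiskerRight_comp_whiskerLeft hl ho ha.2.2.2.2.2.2.2)
end

section
/- Let G : C ⥤ D and F : D ⥤ C be functors with an ambiadjunction F ⊣ G ⊣ F, i.e., adjunctions F ⊣ G (unit η₁ : 𝟭_D ⟶ GF, counit ε₁ : FG ⟶ 𝟭_C) and G ⊣ F (unit η₂ : 𝟭_C ⟶ FG, counit ε₂ : GF ⟶ 𝟭_D). Then the functor Φ : (D ⥤ D) ⥤ (C ⥤ C), Φ(X) = F ∘ X ∘ G, equipped with the lax structure lax₀ = η₂, lax_{X,Y} = F ∗ X ∗ ε₂ ∗ Y ∗ G and the oplax structure oplax₀ = ε₁, oplax_{X,Y} = F ∗ X ∗ η₁ ∗ Y ∗ G, is a Frobenius monoidal functor between the endofunctor categories (with composition as tensor product). -/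
open CategoryTheory MonoidalCategory

universe v₁ v₂ v₃ u₁ u₂ u₃

variable {D : Type u₁} [Category.{v₁} D] [MonoidalCategory D]
variable {C : Type u₂} [Category.{v₂} C] [MonoidalCategory C]

attribute [local instance] CategoryTheory.endofunctorMonoidalCategory

universe w₁ w₂ s₁ s₂

variable {C' : Type s₁} [Category.{w₁} C'] {D' : Type s₂} [Category.{w₂} D']

/-- The functor `Φ = Hom(G, F) : End(D) ⥤ End(C)`, `X ↦ F ∘ X ∘ G`, equipped with the lax
monoidal structure induced by the adjunction `G ⊣ F` and the oplax monoidal structure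
induced by the adjunction `F ⊣ G`. -/
def PhiFrobData (G : C' ⥤ D') (F : D' ⥤ C')
    (adj₁ : F ⊣ G) (adj₂ : G ⊣ F) : FrobData (D' ⥤ D') (C' ⥤ C') where
  F :=
    { obj := fun X => G ⋙ X ⋙ F
      map := fun α => CategoryTheory.Functor.whiskerRight (CategoryTheory.Functor.whiskerLeft G α) F }
  lax X Y :=
    CategoryTheory.Functor.whiskerRight
      (CategoryTheory.Functor.whiskerLeft (G ⋙ X) (CategoryTheory.Functor.whiskerRight adj₂.counit Y)) F
  lax₀ := adj₂.unit
  oplax X Y :=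
    CategoryTheory.Functor.whiskerRight
      (CategoryTheory.Functor.whiskerLeft (G ⋙ X) (CategoryTheory.Functor.whiskerRight adj₁.unit Y)) F
  oplax₀ := adj₁.counit

/-!
Componentwise every axiom is one fact about the units and counits, pushed through `F ∘ Z`:
naturality and associativity of the lax (oplax) structure are naturality of `ε₂` (`η₁`), its
unit laws are the triangle identities of `G ⊣ F` (`F ⊣ G`), and the two Frobenius laws are
naturality of `η₁` and of `ε₂`, so they hold for arbitrary transformations in place of the
units and counits.
-/

def whiskeringFrobData (G : C' ⥤ D') (F : D' ⥤ C') (η₂ : 𝟭 C' ⟶ G ⋙ F)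
    (ε₂ : F ⋙ G ⟶ 𝟭 D') (η₁ : 𝟭 D' ⟶ F ⋙ G) (ε₁ : G ⋙ F ⟶ 𝟭 C') :
    FrobData (D' ⥤ D') (C' ⥤ C') where
  F :=
    { obj := fun X => G ⋙ X ⋙ F
      map := fun α => Functor.whiskerRight (Functor.whiskerLeft G α) F }
  lax X Y := Functor.whiskerRight (Functor.whiskerLeft (G ⋙ X) (Functor.whiskerRight ε₂ Y)) F
  lax₀ := η₂
  oplax X Y := Functor.whiskerRight (Functor.whiskerLeft (G ⋙ X) (Functor.whiskerRight η₁ Y)) F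
  oplax₀ := ε₁

namespace whiskeringFrobData

variable {G : C' ⥤ D'} {F : D' ⥤ C'}

section Components

variable (η₂ : 𝟭 C' ⟶ G ⋙ F) (ε₂ : F ⋙ G ⟶ 𝟭 D') (η₁ : 𝟭 D' ⟶ F ⋙ G) (ε₁ : G ⋙ F ⟶ 𝟭 C')

@[simp]
lemma F_obj_obj (X : D' ⥤ D') (c : C') :
    ((whiskeringFrobData G F η₂ ε₂ η₁ ε₁).F.obj X).obj c = F.obj (X.obj (G.obj c)) := rfl

@[simp]
lemma F_obj_map (X : D' ⥤ D') {c c' : C'} (f : c ⟶ c') :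
    ((whiskeringFrobData G F η₂ ε₂ η₁ ε₁).F.obj X).map f = F.map (X.map (G.map f)) := rfl

@[simp]
lemma F_map_app {X Y : D' ⥤ D'} (f : X ⟶ Y) (c : C') :
    ((whiskeringFrobData G F η₂ ε₂ η₁ ε₁).F.map f).app c = F.map (f.app (G.obj c)) := rfl

@[simp]
lemma lax_app (X Y : D' ⥤ D') (c : C') :
    ((whiskeringFrobData G F η₂ ε₂ η₁ ε₁).lax X Y).app c =
      F.map (Y.map (ε₂.app (X.obj (G.obj c)))) := rfl

@[simp]
lemma lax₀_app (c : C') : (whiskeringFrobData G F η₂ ε₂ η₁ ε₁).lax₀.app c = η₂.app c := rfl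

@[simp]
lemma oplax_app (X Y : D' ⥤ D') (c : C') :
    ((whiskeringFrobData G F η₂ ε₂ η₁ ε₁).oplax X Y).app c =
      F.map (Y.map (η₁.app (X.obj (G.obj c)))) := rfl

@[simp]
lemma oplax₀_app (c : C') :
    (whiskeringFrobData G F η₂ ε₂ η₁ ε₁).oplax₀.app c = ε₁.app c := rfl

end Components

lemma isLax (adj : G ⊣ F) (η₁ : 𝟭 D' ⟶ F ⋙ G) (ε₁ : G ⋙ F ⟶ 𝟭 C') :
    (whiskeringFrobData G F adj.unit adj.counit η₁ ε₁).IsLax := by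
  refine ⟨fun f g => ?_, fun X Y Z => ?_, fun X => ?_, fun X => ?_⟩ <;> ext c
  · simp [← Functor.map_comp]
  · simp [← Functor.map_comp, adj.counit_naturality]
  · simp [← Functor.map_comp, adj.left_triangle_components]
  · simp [adj.right_triangle_components]

lemma isOplax (adj : F ⊣ G) (η₂ : 𝟭 C' ⟶ G ⋙ F) (ε₂ : F ⋙ G ⟶ 𝟭 D') :
    (whiskeringFrobData G F η₂ ε₂ adj.unit adj.counit).IsOplax := by
  refine ⟨fun f g => ?_, fun X Y Z => ?_, fun X => ?_, fun X => ?_⟩ <;> ext c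
  · simp [← Functor.map_comp]
  · simp [← Functor.map_comp, adj.unit_naturality]
  · simp [← Functor.map_comp, adj.right_triangle_components]
  · simp [adj.left_triangle_components]

lemma isFrobenius (η₂ : 𝟭 C' ⟶ G ⋙ F) (ε₂ : F ⋙ G ⟶ 𝟭 D') (η₁ : 𝟭 D' ⟶ F ⋙ G)
    (ε₁ : G ⋙ F ⟶ 𝟭 C') : (whiskeringFrobData G F η₂ ε₂ η₁ ε₁).IsFrobenius := by
  refine ⟨fun X Y Z => ?_, fun X Y Z => ?_⟩ <;> ext c
  · simpa [← Functor.map_comp] using congr_arg (F.map ∘ Z.map) (η₁.naturality _).symm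
  · simpa [← Functor.map_comp] using congr_arg (F.map ∘ Z.map) (ε₂.naturality _)

end whiskeringFrobData

/-- for an ambiadjunction `F ⊣ G ⊣ F`, the functor
`Φ : End(D) ⥤ End(C)`, `Φ(X) = F ∘ X ∘ G`, with lax structure
`lax₀ = η₂`, `lax_{X,Y} = F ∗ X ∗ ε₂ ∗ Y ∗ G` and oplax structure `oplax₀ = ε₁`,
`oplax_{X,Y} = F ∗ X ∗ η₁ ∗ Y ∗ G`, is a Frobenius monoidal functor between the
endofunctor categories (monoidal under composition). -/
theorem Phi_of_ambiadjunction_frobenius_monoidal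
    (G : C' ⥤ D') (F : D' ⥤ C') (adj₁ : F ⊣ G) (adj₂ : G ⊣ F) :
    (PhiFrobData G F adj₁ adj₂).IsLax ∧ (PhiFrobData G F adj₁ adj₂).IsOplax ∧
      (PhiFrobData G F adj₁ adj₂).IsFrobenius :=
  ⟨whiskeringFrobData.isLax adj₂ adj₁.unit adj₁.counit,
    whiskeringFrobData.isOplax adj₁ adj₂.unit adj₂.counit,
    whiskeringFrobData.isFrobenius adj₂.unit adj₂.counit adj₁.unit adj₁.counit⟩
end

section
/- Let G : C ⥤ D be a strong monoidal functor, G ⊣ R a monoidal adjunction, and suppose the right projection formula morphism rproj_{X,A} : R(X) ⊗ A ⟶ R(X ⊗ G(A)), defined as lax^R_{X,GA} ∘ (id_{RX} ⊗ unit_A), is an isomorphism for all A ∈ C, X ∈ D. Then for every X ∈ D, the assignment A ↦ R(X ⊗ G(A)) defines a right C-module endofunctor of C (with right lineator built from oplax^G and rproj⁻¹), and the morphisms rproj_{X,-} : (R(X) ⊗ -) ⟶ R(X ⊗ G(-)) form an isomorphism of right C-module functors; moreover this isomorphism is monoidal: lax^R_{X,Y} ⊗ A followed by rproj_{X⊗Y,A}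 equals rproj_{X, R(Y⊗GA)} ∘ (id ⊗ rproj_{Y,A}) followed by lax^R_{X, Y⊗GA} and R(X ⊗ counit). -/
open CategoryTheory MonoidalCategory Functor.LaxMonoidal Functor.OplaxMonoidal

universe v₁ v₂ u₁ u₂

variable {C : Type u₁} [Category.{v₁} C] [MonoidalCategory C]
variable {D : Type u₂} [Category.{v₂} D] [MonoidalCategory D]

/-- The lax monoidal functor axioms together with the monoidal adjunction conditions
for a lax structure `(μR, εR)` on the right adjoint `R` of a strong monoidal `G`. -/
def IsMonoidalAdjunctionStructure (G : C ⥤ D) [G.Monoidal] (R : D ⥤ C) (adj : G ⊣ R)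
    (μR : ∀ X Y : D, R.obj X ⊗ R.obj Y ⟶ R.obj (X ⊗ Y)) (εR : 𝟙_ C ⟶ R.obj (𝟙_ D)) :
    Prop :=
  (∀ {X Y X' Y' : D} (f : X ⟶ X') (g : Y ⟶ Y'),
    (R.map f ⊗ₘ R.map g) ≫ μR X' Y' = μR X Y ≫ R.map (f ⊗ₘ g)) ∧
  (∀ X Y Z : D,
    (μR X Y ▷ R.obj Z) ≫ μR (X ⊗ Y) Z ≫ R.map (α_ X Y Z).hom =
      (α_ (R.obj X) (R.obj Y) (R.obj Z)).hom ≫ (R.obj X ◁ μR Y Z) ≫ μR X (Y ⊗ Z)) ∧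
  (∀ X : D, (εR ▷ R.obj X) ≫ μR (𝟙_ D) X ≫ R.map (λ_ X).hom = (λ_ (R.obj X)).hom) ∧
  (∀ X : D, (R.obj X ◁ εR) ≫ μR X (𝟙_ D) ≫ R.map (ρ_ X).hom = (ρ_ (R.obj X)).hom) ∧
  (∀ A B : C,
    (adj.unit.app A ⊗ₘ adj.unit.app B) ≫ μR (G.obj A) (G.obj B) ≫ R.map (μ G A B) =
      adj.unit.app (A ⊗ B)) ∧
  (adj.unit.app (𝟙_ C) = εR ≫ R.map (ε G)) ∧
  (∀ X Y : D,
    μ G (R.obj X) (R.obj Y) ≫ G.map (μR X Y) ≫ adj.counit.app (X ⊗ Y) =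
      (adj.counit.app X ⊗ₘ adj.counit.app Y)) ∧
  (ε G ≫ G.map εR ≫ adj.counit.app (𝟙_ D) = 𝟙 (𝟙_ D))

/-- The right projection formula morphism `R(X) ⊗ A ⟶ R(X ⊗ G(A))` of a monoidal
adjunction `G ⊣ R`, namely `lax^R_{X,G(A)} ∘ (id ⊗ unit_A)`. -/
def rproj (G : C ⥤ D) (R : D ⥤ C) (adj : G ⊣ R)
    (μR : ∀ X Y : D, R.obj X ⊗ R.obj Y ⟶ R.obj (X ⊗ Y)) (X : D) (A : C) :
    R.obj X ⊗ A ⟶ R.obj (X ⊗ G.obj A) :=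
  (R.obj X ◁ adj.unit.app A) ≫ μR X (G.obj A)

/-- The right lineator of the right `C`-module endofunctor `A ↦ R(X ⊗ G(A))` of `C`,
built from the oplax structure of `G` and the inverse of the right projection formula
morphism. -/
noncomputable def rlinor (G : C ⥤ D) [G.Monoidal] (R : D ⥤ C) (adj : G ⊣ R)
    (μR : ∀ X Y : D, R.obj X ⊗ R.obj Y ⟶ R.obj (X ⊗ Y))
    (hiso : ∀ (X : D) (A : C), IsIso (rproj G R adj μR X A)) (X : D) (A B : C) :
    R.obj (X ⊗ G.obj (A ⊗ B)) ⟶ R.obj (X ⊗ G.obj A) ⊗ B :=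
  letI := hiso (X ⊗ G.obj A) B
  R.map ((X ◁ δ G A B) ≫ (α_ X (G.obj A) (G.obj B)).inv) ≫
    CategoryTheory.inv (rproj G R adj μR (X ⊗ G.obj A) B)

/-! By monoidality of the unit and associativity of `lax^R`, `rproj_{X,A⊗B}` followed by
`R(X ◁ δ) ≫ R(α⁻¹)` equals `α⁻¹ ≫ (rproj_{X,A} ▷ B)` followed by `rproj_{X⊗GA,B}`. Read with `rproj` inverted, this says that `rproj_{X,-}`
intertwines the lineator `α⁻¹` of `R(X) ⊗ -` with `rlinor`, so the module coherences of `rlinor`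
are transported along the isomorphism `rproj_{X,-}` from the coherence of associators.
Monoidality of `rproj` comes from the triangle identity in the form
`rproj_{X,R(Z)} ≫ R(X ◁ counit_Z) = lax^R_{X,Z}` together with associativity of `lax^R`. -/

section ProjectionFormula

variable {G : C ⥤ D} {R : D ⥤ C} {adj : G ⊣ R}
  {μR : ∀ X Y : D, R.obj X ⊗ R.obj Y ⟶ R.obj (X ⊗ Y)}

lemma whiskerLeft_map_comp_μR
    (hnat : ∀ {X Y X' Y' : D} (f : X ⟶ X') (g : Y ⟶ Y'),
      (R.map f ⊗ₘ R.map g) ≫ μR X' Y' = μR X Y ≫ R.map (f ⊗ₘ g))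
    (X : D) {Y Y' : D} (g : Y ⟶ Y') :
    (R.obj X ◁ R.map g) ≫ μR X Y' = μR X Y ≫ R.map (X ◁ g) := by
  simpa using hnat (𝟙 X) g

lemma whiskerLeft_μR_comp_μR_map_associator_inv
    (hassoc : ∀ X Y Z : D,
      (μR X Y ▷ R.obj Z) ≫ μR (X ⊗ Y) Z ≫ R.map (α_ X Y Z).hom =
        (α_ (R.obj X) (R.obj Y) (R.obj Z)).hom ≫ (R.obj X ◁ μR Y Z) ≫ μR X (Y ⊗ Z))
    (X Y Z : D) :
    (R.obj X ◁ μR Y Z) ≫ μR X (Y ⊗ Z) ≫ R.map (α_ X Y Z).inv =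
      (α_ (R.obj X) (R.obj Y) (R.obj Z)).inv ≫ (μR X Y ▷ R.obj Z) ≫ μR (X ⊗ Y) Z := by
  rw [← cancel_mono (R.map (α_ X Y Z).hom), Category.assoc, Category.assoc, ← R.map_comp,
    Iso.inv_hom_id, R.map_id, Category.comp_id, Category.assoc, Category.assoc, hassoc,
    Iso.inv_hom_id_assoc]

lemma rproj_naturality
    (hnat : ∀ {X Y X' Y' : D} (f : X ⟶ X') (g : Y ⟶ Y'),
      (R.map f ⊗ₘ R.map g) ≫ μR X' Y' = μR X Y ≫ R.map (f ⊗ₘ g))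
    (X : D) {A A' : C} (f : A ⟶ A') :
    (R.obj X ◁ f) ≫ rproj G R adj μR X A' = rproj G R adj μR X A ≫ R.map (X ◁ G.map f) := by
  rw [rproj, rproj, ← whiskerLeft_comp_assoc, ← adj.unit_naturality, whiskerLeft_comp_assoc,
    Category.assoc, whiskerLeft_map_comp_μR hnat X (G.map f)]

lemma rproj_comp_map_whiskerLeft_counit
    (hnat : ∀ {X Y X' Y' : D} (f : X ⟶ X') (g : Y ⟶ Y'),
      (R.map f ⊗ₘ R.map g) ≫ μR X' Y' = μR X Y ≫ R.map (f ⊗ₘ g))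
    (X Z : D) :
    rproj G R adj μR X (R.obj Z) ≫ R.map (X ◁ adj.counit.app Z) = μR X Z := by
  rw [rproj, Category.assoc, ← whiskerLeft_map_comp_μR hnat, ← whiskerLeft_comp_assoc,
    Adjunction.right_triangle_components, whiskerLeft_id, Category.id_comp]
  rfl

lemma rproj_monoidal
    (hnat : ∀ {X Y X' Y' : D} (f : X ⟶ X') (g : Y ⟶ Y'),
      (R.map f ⊗ₘ R.map g) ≫ μR X' Y' = μR X Y ≫ R.map (f ⊗ₘ g))
    (hassoc : ∀ X Y Z : D,
      (μR X Y ▷ R.obj Z) ≫ μR (X ⊗ Y) Z ≫ R.map (α_ X Y Z).hom =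
        (α_ (R.obj X) (R.obj Y) (R.obj Z)).hom ≫ (R.obj X ◁ μR Y Z) ≫ μR X (Y ⊗ Z))
    (X Y : D) (A : C) :
    (μR X Y ▷ A) ≫ rproj G R adj μR (X ⊗ Y) A =
      (α_ (R.obj X) (R.obj Y) A).hom ≫ (R.obj X ◁ rproj G R adj μR Y A) ≫
        rproj G R adj μR X (R.obj (Y ⊗ G.obj A)) ≫
        R.map (X ◁ adj.counit.app (Y ⊗ G.obj A)) ≫ R.map (α_ X Y (G.obj A)).inv := by
  rw [reassoc_of% rproj_comp_map_whiskerLeft_counit hnat, rproj, rproj, whiskerLeft_comp_assoc,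
    whiskerLeft_μR_comp_μR_map_associator_inv hassoc, ← whisker_exchange_assoc,
    ← associator_naturality_right_assoc]
  dsimp only [Functor.comp_obj]
  rw [Iso.hom_inv_id_assoc]

lemma unit_app_tensor_comp_map_δ [G.Monoidal]
    (hunit : ∀ A B : C,
      (adj.unit.app A ⊗ₘ adj.unit.app B) ≫ μR (G.obj A) (G.obj B) ≫ R.map (μ G A B) =
        adj.unit.app (A ⊗ B))
    (A B : C) :
    adj.unit.app (A ⊗ B) ≫ R.map (δ G A B) =
      (adj.unit.app A ⊗ₘ adj.unit.app B) ≫ μR (G.obj A) (G.obj B) := by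
  rw [← hunit, Category.assoc, Category.assoc, ← R.map_comp, Functor.Monoidal.μ_δ, R.map_id,
    Category.comp_id]

variable {εR : 𝟙_ C ⟶ R.obj (𝟙_ D)}

lemma rproj_tensor [G.Monoidal] (hma : IsMonoidalAdjunctionStructure G R adj μR εR)
    (X : D) (A B : C) :
    rproj G R adj μR X (A ⊗ B) ≫ R.map ((X ◁ δ G A B) ≫ (α_ X (G.obj A) (G.obj B)).inv) =
      (α_ (R.obj X) A B).inv ≫ (rproj G R adj μR X A ▷ B) ≫
        rproj G R adj μR (X ⊗ G.obj A) B := by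
  obtain ⟨hnat, hassoc, -, -, hunit, -, -, -⟩ := hma
  calc rproj G R adj μR X (A ⊗ B) ≫ R.map ((X ◁ δ G A B) ≫ (α_ X (G.obj A) (G.obj B)).inv)
      _ = (R.obj X ◁ (adj.unit.app A ⊗ₘ adj.unit.app B)) ≫
          (R.obj X ◁ μR (G.obj A) (G.obj B)) ≫ μR X (G.obj A ⊗ G.obj B) ≫
          R.map (α_ X (G.obj A) (G.obj B)).inv := by
        rw [rproj, R.map_comp, Category.assoc, ← reassoc_of% whiskerLeft_map_comp_μR hnat,
          ← whiskerLeft_comp_assoc, unit_app_tensor_comp_map_δ hunit, whiskerLeft_comp_assoc]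
      _ = (α_ (R.obj X) A B).inv ≫ (rproj G R adj μR X A ▷ B) ≫
          rproj G R adj μR (X ⊗ G.obj A) B := by
        rw [whiskerLeft_μR_comp_μR_map_associator_inv hassoc, rproj, rproj]
        simp only [Functor.id_obj, Functor.comp_obj, MonoidalCategory.tensorHom_def,
          whiskerLeft_comp, comp_whiskerRight, whisker_assoc, Category.assoc, Iso.inv_hom_id_assoc]
        rw [← whisker_exchange_assoc, ← associator_inv_naturality_right_assoc]

lemma rproj_comp_rlinor [G.Monoidal] (hma : IsMonoidalAdjunctionStructure G R adj μR εR)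
    (hiso : ∀ (X : D) (A : C), IsIso (rproj G R adj μR X A)) (X : D) (A B : C) :
    rproj G R adj μR X (A ⊗ B) ≫ rlinor G R adj μR hiso X A B =
      (α_ (R.obj X) A B).inv ≫ (rproj G R adj μR X A ▷ B) := by
  have := hiso (X ⊗ G.obj A) B
  rw [← cancel_mono (rproj G R adj μR (X ⊗ G.obj A) B), rlinor, Category.assoc,
    Category.assoc, IsIso.inv_hom_id, Category.comp_id, rproj_tensor hma, Category.assoc]

lemma rlinor_associativity [G.Monoidal] (hma : IsMonoidalAdjunctionStructure G R adj μR εR)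
    (hiso : ∀ (X : D) (A : C), IsIso (rproj G R adj μR X A)) (X : D) (A B B' : C) :
    R.map (X ◁ G.map (α_ A B B').hom) ≫ rlinor G R adj μR hiso X A (B ⊗ B') =
      rlinor G R adj μR hiso X (A ⊗ B) B' ≫ (rlinor G R adj μR hiso X A B ▷ B') ≫
        (α_ (R.obj (X ⊗ G.obj A)) B B').hom := by
  have := hiso X ((A ⊗ B) ⊗ B')
  rw [← cancel_epi (rproj G R adj μR X ((A ⊗ B) ⊗ B')),
    ← reassoc_of% rproj_naturality hma.1, rproj_comp_rlinor hma,
    reassoc_of% rproj_comp_rlinor hma, ← comp_whiskerRight_assoc,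
    rproj_comp_rlinor hma]
  monoidal

lemma rlinor_rightUnitor [G.Monoidal] (hma : IsMonoidalAdjunctionStructure G R adj μR εR)
    (hiso : ∀ (X : D) (A : C), IsIso (rproj G R adj μR X A)) (X : D) (A : C) :
    rlinor G R adj μR hiso X A (𝟙_ C) ≫ (ρ_ (R.obj (X ⊗ G.obj A))).hom =
      R.map (X ◁ G.map (ρ_ A).hom) := by
  have := hiso X (A ⊗ 𝟙_ C)
  rw [← cancel_epi (rproj G R adj μR X (A ⊗ 𝟙_ C)), reassoc_of% rproj_comp_rlinor hma,
    ← rproj_naturality hma.1]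
  monoidal

end ProjectionFormula

/-- if `G ⊣ R` is a monoidal adjunction for which all right projection
formula morphisms are isomorphisms, then for each `X` the assignment `A ↦ R(X ⊗ G(A))`
is a right `C`-module endofunctor of `C` (with the right lineator `rlinor`), the
morphisms `rproj_{X,-} : (R(X) ⊗ -) ⟶ R(X ⊗ G(-))` form an isomorphism of right
`C`-module functors, and this isomorphism is monoidal. -/
theorem rproj_is_monoidal_module_isomorphism
    (G : C ⥤ D) [G.Monoidal] (R : D ⥤ C) (adj : G ⊣ R)
    (μR : ∀ X Y : D, R.obj X ⊗ R.obj Y ⟶ R.obj (X ⊗ Y)) (εR : 𝟙_ C ⟶ R.obj (𝟙_ D))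
    (hma : IsMonoidalAdjunctionStructure G R adj μR εR)
    (hiso : ∀ (X : D) (A : C), IsIso (rproj G R adj μR X A)) :
    -- (a) `A ↦ R(X ⊗ G(A))` with `rlinor` is a right `C`-module endofunctor of `C`:
    -- coherence with the associators
    (∀ (X : D) (A B B' : C),
      R.map (X ◁ G.map (α_ A B B').hom) ≫ rlinor G R adj μR hiso X A (B ⊗ B') =
        rlinor G R adj μR hiso X (A ⊗ B) B' ≫ (rlinor G R adj μR hiso X A B ▷ B') ≫
          (α_ (R.obj (X ⊗ G.obj A)) B B').hom) ∧
    -- coherence with the right unitors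
    (∀ (X : D) (A : C),
      rlinor G R adj μR hiso X A (𝟙_ C) ≫ (ρ_ (R.obj (X ⊗ G.obj A))).hom =
        R.map (X ◁ G.map (ρ_ A).hom)) ∧
    -- (b) `rproj_{X,-}` is a morphism (hence an isomorphism) of right `C`-module
    -- functors from `(R(X) ⊗ -)` to `R(X ⊗ G(-))`: it is natural ...
    (∀ (X : D) {A A' : C} (f : A ⟶ A'),
      (R.obj X ◁ f) ≫ rproj G R adj μR X A' =
        rproj G R adj μR X A ≫ R.map (X ◁ G.map f)) ∧
    -- ... and compatible with the right lineators
    (∀ (X : D) (A B : C),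
      (α_ (R.obj X) A B).inv ≫ (rproj G R adj μR X A ▷ B) =
        rproj G R adj μR X (A ⊗ B) ≫ rlinor G R adj μR hiso X A B) ∧
    -- (c) monoidality of `rproj`
    (∀ (X Y : D) (A : C),
      (μR X Y ▷ A) ≫ rproj G R adj μR (X ⊗ Y) A =
        (α_ (R.obj X) (R.obj Y) A).hom ≫ (R.obj X ◁ rproj G R adj μR Y A) ≫
          rproj G R adj μR X (R.obj (Y ⊗ G.obj A)) ≫
          R.map (X ◁ adj.counit.app (Y ⊗ G.obj A)) ≫
          R.map (α_ X Y (G.obj A)).inv) :=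
  ⟨rlinor_associativity hma hiso, rlinor_rightUnitor hma hiso, rproj_naturality hma.1,
    fun X A B => (rproj_comp_rlinor hma hiso X A B).symm, rproj_monoidal hma.1 hma.2.1⟩
end

section
/- Let G : C ⥤ D be a strong monoidal functor with an ambiadjunction F ⊣ G ⊣ F, where F carries the lax monoidal structure induced from the monoidal adjunction G ⊣ F and the oplax monoidal structure induced from the opmonoidal adjunction F ⊣ G. If the right projection formula morphism rproj^{F,G⊣F}_{X,A} : F(X) ⊗ A ⟶ F(X ⊗ G(A)) and the right projection formula morphism rproj^{F,F⊣G}_{X,A} : F(X ⊗ G(A)) ⟶ F(X) ⊗ A are mutually inverse for all A ∈ C, X ∈ D, then F together with these lax and oplax structures is a Frobenius monoidal functor. -/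
/-!
By the triangle identities both structure maps of `F` factor through the right projection
morphisms: `μ X Y = rproj^{G⊣F}_{X,FY} ≫ F(X ◁ counit_Y)` and
`δ X Y = F(X ◁ unit_Y) ≫ rproj^{F⊣G}_{X,FY}`. Associativity of `μ` and coassociativity of `δ`
describe how each projection morphism interacts with tensoring by `F X` on the left. When the
two projection morphisms are mutually inverse, inverting them in these identities gives mixed
relations between `δ` and `rproj^{G⊣F}`, and between `μ` and `rproj^{F⊣G}`; substituted into
the factorisations, these are exactly the two Frobenius conditions. The (op)lax axioms
themselves hold because the induced structures are Mathlib's `rightAdjointLaxMonoidal` and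
`leftAdjointOplaxMonoidal`.
-/

open CategoryTheory MonoidalCategory

universe v₁ v₂ v₃ u₁ u₂ u₃

variable {D : Type u₁} [Category.{v₁} D] [MonoidalCategory D]
variable {C : Type u₂} [Category.{v₂} C] [MonoidalCategory C]

open Functor.LaxMonoidal Functor.OplaxMonoidal


/-- Given a strong monoidal functor `G : C ⥤ D` and an ambiadjunction `F ⊣ G ⊣ F`, the
functor `F` equipped with the lax monoidal structure induced from the monoidal adjunction
`G ⊣ F` and the oplax monoidal structure induced from the opmonoidal adjunction `F ⊣ G`. -/
def inducedFrobData (G : C ⥤ D) [G.Monoidal] (F : D ⥤ C)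
    (adj₁ : F ⊣ G) (adj₂ : G ⊣ F) : FrobData D C where
  F := F
  lax X Y := adj₂.unit.app (F.obj X ⊗ F.obj Y) ≫
    F.map (δ G (F.obj X) (F.obj Y) ≫ (adj₂.counit.app X ⊗ₘ adj₂.counit.app Y))
  lax₀ := adj₂.unit.app (𝟙_ C) ≫ F.map (η G)
  oplax X Y := F.map ((adj₁.unit.app X ⊗ₘ adj₁.unit.app Y) ≫ μ G (F.obj X) (F.obj Y)) ≫
    adj₁.counit.app (F.obj X ⊗ F.obj Y)
  oplax₀ := F.map (ε G) ≫ adj₁.counit.app (𝟙_ C)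

/-- The right projection formula morphism `F(X) ⊗ A ⟶ F(X ⊗ G(A))` associated to the
monoidal adjunction `G ⊣ F`. -/
def rprojR (G : C ⥤ D) [G.Monoidal] (F : D ⥤ C) (adj₁ : F ⊣ G) (adj₂ : G ⊣ F)
    (X : D) (A : C) : F.obj X ⊗ A ⟶ F.obj (X ⊗ G.obj A) :=
  (F.obj X ◁ adj₂.unit.app A) ≫ (inducedFrobData G F adj₁ adj₂).lax X (G.obj A)

/-- The right projection formula morphism `F(X ⊗ G(A)) ⟶ F(X) ⊗ A` associated to the
opmonoidal adjunction `F ⊣ G`. -/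
def rprojL (G : C ⥤ D) [G.Monoidal] (F : D ⥤ C) (adj₁ : F ⊣ G) (adj₂ : G ⊣ F)
    (X : D) (A : C) : F.obj (X ⊗ G.obj A) ⟶ F.obj X ⊗ A :=
  (inducedFrobData G F adj₁ adj₂).oplax X (G.obj A) ≫ (F.obj X ◁ adj₁.counit.app A)

namespace CategoryTheory.Adjunction

variable {G : C ⥤ D} {F : D ⥤ C}

def rightProjLax (adj : G ⊣ F) [F.LaxMonoidal] (X : D) (A : C) :
    F.obj X ⊗ A ⟶ F.obj (X ⊗ G.obj A) :=
  (F.obj X ◁ adj.unit.app A) ≫ μ F X (G.obj A)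

def rightProjOplax (adj : F ⊣ G) [F.OplaxMonoidal] (X : D) (A : C) :
    F.obj (X ⊗ G.obj A) ⟶ F.obj X ⊗ A :=
  δ F X (G.obj A) ≫ (F.obj X ◁ adj.counit.app A)

lemma μ_eq_rightProjLax_comp (adj : G ⊣ F) [F.LaxMonoidal] (X Y : D) :
    μ F X Y = adj.rightProjLax X (F.obj Y) ≫ F.map (X ◁ adj.counit.app Y) := by
  rw [rightProjLax, Category.assoc, ← μ_natural_right, ← whiskerLeft_comp_assoc,
    right_triangle_components, whiskerLeft_id, Category.id_comp]
  rfl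

lemma δ_eq_comp_rightProjOplax (adj : F ⊣ G) [F.OplaxMonoidal] (X Y : D) :
    δ F X Y = F.map (X ◁ adj.unit.app Y) ≫ adj.rightProjOplax X (F.obj Y) := by
  erw [rightProjOplax, ← δ_natural_right_assoc, ← whiskerLeft_comp, left_triangle_components,
    whiskerLeft_id, Category.comp_id]
  rfl

lemma associator_inv_comp_whiskerRight_μ_comp_rightProjLax (adj : G ⊣ F) [F.LaxMonoidal]
    (X Y : D) (A : C) :
    (α_ _ _ _).inv ≫ (μ F X Y ▷ A) ≫ adj.rightProjLax (X ⊗ Y) A =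
      (F.obj X ◁ adj.rightProjLax Y A) ≫ μ F X (Y ⊗ G.obj A) ≫ F.map (α_ X Y (G.obj A)).inv := by
  rw [rightProjLax, rightProjLax, whiskerLeft_comp_assoc, Functor.LaxMonoidal.associativity_inv,
    ← whisker_exchange_assoc, ← associator_inv_naturality_right_assoc]
  rfl

lemma rightProjOplax_comp_whiskerRight_δ_comp_associator_hom (adj : F ⊣ G) [F.OplaxMonoidal]
    (X Y : D) (A : C) :
    adj.rightProjOplax (X ⊗ Y) A ≫ (δ F X Y ▷ A) ≫ (α_ _ _ _).hom =
      F.map (α_ X Y (G.obj A)).hom ≫ δ F X (Y ⊗ G.obj A) ≫ (F.obj X ◁ adj.rightProjOplax Y A) := by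
  rw [rightProjOplax, rightProjOplax, Category.assoc, whisker_exchange_assoc,
    associator_naturality_right, Functor.OplaxMonoidal.associativity_assoc, whiskerLeft_comp]

section Frobenius

variable [F.LaxMonoidal] [F.OplaxMonoidal] (adj₁ : F ⊣ G) (adj₂ : G ⊣ F)

lemma rightProjLax_comp_map_associator_hom_comp_δ
    (h₁ : ∀ X A, adj₂.rightProjLax X A ≫ adj₁.rightProjOplax X A = 𝟙 _)
    (h₂ : ∀ X A, adj₁.rightProjOplax X A ≫ adj₂.rightProjLax X A = 𝟙 _) (X Y : D) (A : C) :
    adj₂.rightProjLax (X ⊗ Y) A ≫ F.map (α_ X Y (G.obj A)).hom ≫ δ F X (Y ⊗ G.obj A) =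
      (δ F X Y ▷ A) ≫ (α_ _ _ _).hom ≫ (F.obj X ◁ adj₂.rightProjLax Y A) := by
  calc _ = adj₂.rightProjLax (X ⊗ Y) A ≫ F.map (α_ X Y (G.obj A)).hom ≫ δ F X (Y ⊗ G.obj A) ≫
        (F.obj X ◁ (adj₁.rightProjOplax Y A ≫ adj₂.rightProjLax Y A)) := by
        rw [h₂, whiskerLeft_id, Category.comp_id]
    _ = adj₂.rightProjLax (X ⊗ Y) A ≫ adj₁.rightProjOplax (X ⊗ Y) A ≫ (δ F X Y ▷ A) ≫
        (α_ _ _ _).hom ≫ (F.obj X ◁ adj₂.rightProjLax Y A) := by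
        rw [reassoc_of% adj₁.rightProjOplax_comp_whiskerRight_δ_comp_associator_hom,
          whiskerLeft_comp]
    _ = _ := by rw [reassoc_of% h₁]

lemma μ_comp_map_associator_inv_comp_rightProjOplax
    (h₁ : ∀ X A, adj₂.rightProjLax X A ≫ adj₁.rightProjOplax X A = 𝟙 _)
    (h₂ : ∀ X A, adj₁.rightProjOplax X A ≫ adj₂.rightProjLax X A = 𝟙 _) (X Y : D) (A : C) :
    μ F X (Y ⊗ G.obj A) ≫ F.map (α_ X Y (G.obj A)).inv ≫ adj₁.rightProjOplax (X ⊗ Y) A =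
      (F.obj X ◁ adj₁.rightProjOplax Y A) ≫ (α_ _ _ _).inv ≫ (μ F X Y ▷ A) := by
  calc _ = (F.obj X ◁ (adj₁.rightProjOplax Y A ≫ adj₂.rightProjLax Y A)) ≫ μ F X (Y ⊗ G.obj A) ≫
        F.map (α_ X Y (G.obj A)).inv ≫ adj₁.rightProjOplax (X ⊗ Y) A := by
        rw [h₂, whiskerLeft_id, Category.id_comp]
    _ = (F.obj X ◁ adj₁.rightProjOplax Y A) ≫ (α_ _ _ _).inv ≫ (μ F X Y ▷ A) ≫
        adj₂.rightProjLax (X ⊗ Y) A ≫ adj₁.rightProjOplax (X ⊗ Y) A := by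
        rw [whiskerLeft_comp_assoc,
          reassoc_of% adj₂.associator_inv_comp_whiskerRight_μ_comp_rightProjLax]
    _ = _ := by rw [h₁, Category.comp_id]

lemma frobenius_left_of_rightProj_inverse
    (h₁ : ∀ X A, adj₂.rightProjLax X A ≫ adj₁.rightProjOplax X A = 𝟙 _)
    (h₂ : ∀ X A, adj₁.rightProjOplax X A ≫ adj₂.rightProjLax X A = 𝟙 _) (X Y Z : D) :
    (F.obj X ◁ δ F Y Z) ≫ (α_ _ _ _).inv ≫ (μ F X Y ▷ F.obj Z) =
      μ F X (Y ⊗ Z) ≫ F.map (α_ X Y Z).inv ≫ δ F (X ⊗ Y) Z := by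
  erw [δ_eq_comp_rightProjOplax adj₁ Y Z, δ_eq_comp_rightProjOplax adj₁ (X ⊗ Y) Z,
    whiskerLeft_comp_assoc, ← μ_comp_map_associator_inv_comp_rightProjOplax adj₁ adj₂ h₁ h₂,
    μ_natural_right_assoc, ← F.map_comp_assoc, associator_inv_naturality_right, F.map_comp_assoc]
  rfl

lemma frobenius_right_of_rightProj_inverse
    (h₁ : ∀ X A, adj₂.rightProjLax X A ≫ adj₁.rightProjOplax X A = 𝟙 _)
    (h₂ : ∀ X A, adj₁.rightProjOplax X A ≫ adj₂.rightProjLax X A = 𝟙 _) (X Y Z : D) :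
    (δ F X Y ▷ F.obj Z) ≫ (α_ _ _ _).hom ≫ (F.obj X ◁ μ F Y Z) =
      μ F (X ⊗ Y) Z ≫ F.map (α_ X Y Z).hom ≫ δ F X (Y ⊗ Z) := by
  rw [μ_eq_rightProjLax_comp adj₂ Y Z, μ_eq_rightProjLax_comp adj₂ (X ⊗ Y) Z,
    whiskerLeft_comp, ← reassoc_of% rightProjLax_comp_map_associator_hom_comp_δ adj₁ adj₂ h₁ h₂,
    δ_natural_right, ← F.map_comp_assoc, ← associator_naturality_right, F.map_comp_assoc,
    Category.assoc]
  rfl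

end Frobenius

end CategoryTheory.Adjunction

def FrobData.ofLaxOplax (F : D ⥤ C) [hμ : F.LaxMonoidal] [hδ : F.OplaxMonoidal] :
    FrobData D C where
  F := F
  lax := μ F
  lax₀ := ε F
  oplax := δ F
  oplax₀ := η F

lemma FrobData.isLax_ofLaxOplax (F : D ⥤ C) [F.LaxMonoidal] [F.OplaxMonoidal] :
    (FrobData.ofLaxOplax F).IsLax :=
  ⟨μ_natural F, Functor.LaxMonoidal.associativity F,
    fun X => (Functor.LaxMonoidal.left_unitality F X).symm,
    fun X => (Functor.LaxMonoidal.right_unitality F X).symm⟩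

lemma FrobData.isOplax_ofLaxOplax (F : D ⥤ C) [F.LaxMonoidal] [F.OplaxMonoidal] :
    (FrobData.ofLaxOplax F).IsOplax :=
  ⟨fun f g => (δ_natural F f g).symm, Functor.OplaxMonoidal.associativity F,
    Functor.OplaxMonoidal.left_unitality_hom F, Functor.OplaxMonoidal.right_unitality_hom F⟩

lemma inducedFrobData_eq_ofLaxOplax (G : C ⥤ D) [G.Monoidal] (F : D ⥤ C)
    (adj₁ : F ⊣ G) (adj₂ : G ⊣ F) :
    inducedFrobData G F adj₁ adj₂ = FrobData.ofLaxOplax F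
      (hμ := adj₂.rightAdjointLaxMonoidal) (hδ := adj₁.leftAdjointOplaxMonoidal) :=
  rfl

/-- Theorem A: in the ambiadjunction context, if the two right projection
formula morphisms are mutual inverses, then `F` with the induced lax and oplax monoidal
structures is a Frobenius monoidal functor. -/
theorem frobenius_monoidal_of_right_projection_formulas_mutually_inverse
    (G : C ⥤ D) [G.Monoidal] (F : D ⥤ C) (adj₁ : F ⊣ G) (adj₂ : G ⊣ F)
    (h₁ : ∀ (X : D) (A : C),
      rprojR G F adj₁ adj₂ X A ≫ rprojL G F adj₁ adj₂ X A = 𝟙 (F.obj X ⊗ A))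
    (h₂ : ∀ (X : D) (A : C),
      rprojL G F adj₁ adj₂ X A ≫ rprojR G F adj₁ adj₂ X A = 𝟙 (F.obj (X ⊗ G.obj A))) :
    (inducedFrobData G F adj₁ adj₂).IsLax ∧ (inducedFrobData G F adj₁ adj₂).IsOplax ∧
      (inducedFrobData G F adj₁ adj₂).IsFrobenius := by
  let := adj₂.rightAdjointLaxMonoidal
  let := adj₁.leftAdjointOplaxMonoidal
  rw [inducedFrobData_eq_ofLaxOplax]
  exact ⟨FrobData.isLax_ofLaxOplax F, FrobData.isOplax_ofLaxOplax F,
    adj₁.frobenius_left_of_rightProj_inverse adj₂ h₁ h₂,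
    adj₁.frobenius_right_of_rightProj_inverse adj₂ h₁ h₂⟩
end

section
/- Let G : C ⥤ D be a braided strong monoidal functor between braided monoidal categories, part of an ambiadjunction F ⊣ G ⊣ F with induced lax and oplax structures on F. If the right projection formula morphisms rproj^{F,G⊣F} and rproj^{F,F⊣G} are mutual inverses, then the left projection formula morphisms lproj^{F,G⊣F}_{A,X} : A ⊗ F(X) ⟶ F(G(A) ⊗ X) and lproj^{F,F⊣G}_{A,X} : F(G(A) ⊗ X) ⟶ A ⊗ F(X) are also mutual inverses. (The key identity is F(β^D_{X,GA}) ∘ rproj_{X,A} = lproj_{A,X} ∘ β^C_{FX,A}, valid for both adjunctions.) -/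
open CategoryTheory MonoidalCategory

universe v₁ v₂ v₃ u₁ u₂ u₃

variable {D : Type u₁} [Category.{v₁} D] [MonoidalCategory D]
variable {C : Type u₂} [Category.{v₂} C] [MonoidalCategory C]

open Functor.LaxMonoidal Functor.OplaxMonoidal

/-- The left projection formula morphism for the monoidal adjunction `G ⊣ F`. -/
def lprojR (G : C ⥤ D) [G.Monoidal] (F : D ⥤ C) (adj₁ : F ⊣ G) (adj₂ : G ⊣ F)
    (A : C) (X : D) : A ⊗ F.obj X ⟶ F.obj (G.obj A ⊗ X) :=
  (adj₂.unit.app A ▷ F.obj X) ≫ (inducedFrobData G F adj₁ adj₂).lax (G.obj A) X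

/-- The left projection formula morphism for the opmonoidal adjunction `F ⊣ G`. -/
def lprojL (G : C ⥤ D) [G.Monoidal] (F : D ⥤ C) (adj₁ : F ⊣ G) (adj₂ : G ⊣ F)
    (A : C) (X : D) : F.obj (G.obj A ⊗ X) ⟶ A ⊗ F.obj X :=
  (inducedFrobData G F adj₁ adj₂).oplax (G.obj A) X ≫ (adj₁.counit.app A ▷ F.obj X)

/-! The braiding is natural and preserved by `G`, so the lax and oplax structures that `F`
inherits from the two adjunctions commute with the braidings. Hence each left projection
morphism is the conjugate of the corresponding right one by `β_ (F.obj X) A` and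
`F.map (β_ X (G.obj A))`, and conjugation preserves being mutually inverse. -/

namespace CategoryTheory

lemma comp_eq_id_of_iso_squares {C : Type*} [Category C] {a b c d : C} (e₁ : a ≅ c) (e₂ : b ≅ d)
    {f : a ⟶ b} {g : b ⟶ a} {f' : c ⟶ d} {g' : d ⟶ c}
    (hf : f ≫ e₂.hom = e₁.hom ≫ f') (hg : e₂.hom ≫ g' = g ≫ e₁.hom) (h : f ≫ g = 𝟙 a) :
    f' ≫ g' = 𝟙 c := by
  rw [← cancel_epi e₁.hom, ← Category.assoc, ← hf, Category.assoc, hg, reassoc_of% h,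
    Category.comp_id]

namespace Functor

variable {C D : Type*} [Category C] [Category D] [MonoidalCategory C] [MonoidalCategory D]
  [BraidedCategory C] [BraidedCategory D]

lemma δ_braiding (G : C ⥤ D) [G.Braided] (A B : C) :
    δ G A B ≫ (β_ (G.obj A) (G.obj B)).hom = G.map (β_ A B).hom ≫ δ G B A := by
  simp

end Functor

end CategoryTheory

section

variable [BraidedCategory C] [BraidedCategory D]
  (G : C ⥤ D) [G.Braided] (F : D ⥤ C) (adj₁ : F ⊣ G) (adj₂ : G ⊣ F)

lemma inducedFrobData_lax_braiding (X Y : D) :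
    (inducedFrobData G F adj₁ adj₂).lax X Y ≫ F.map (β_ X Y).hom =
      (β_ (F.obj X) (F.obj Y)).hom ≫ (inducedFrobData G F adj₁ adj₂).lax Y X := by
  dsimp only [inducedFrobData]
  rw [Category.assoc, ← F.map_comp, Category.assoc, BraidedCategory.braiding_naturality,
    reassoc_of% (Functor.δ_braiding G (F.obj X) (F.obj Y)), F.map_comp, ← Functor.comp_map,
    ← adj₂.unit.naturality_assoc]
  rfl

lemma inducedFrobData_braiding_oplax (X Y : D) :
    F.map (β_ X Y).hom ≫ (inducedFrobData G F adj₁ adj₂).oplax Y X =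
      (inducedFrobData G F adj₁ adj₂).oplax X Y ≫ (β_ (F.obj X) (F.obj Y)).hom := by
  dsimp only [inducedFrobData]
  rw [← F.map_comp_assoc, ← BraidedCategory.braiding_naturality_assoc]
  dsimp only [Functor.comp_obj]
  rw [← Functor.LaxBraided.braided, F.map_comp_assoc, F.map_comp_assoc, ← Functor.comp_map,
    adj₁.counit.naturality, F.map_comp_assoc, Functor.id_map, Category.assoc, Category.assoc]

-- `erw`: once unfolded, the middle objects `(inducedFrobData G F adj₁ adj₂).F.obj _` of these
-- composites agree with `F.obj _` only up to unfolding `inducedFrobData`.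
lemma rprojR_braiding (X : D) (A : C) :
    rprojR G F adj₁ adj₂ X A ≫ F.map (β_ X (G.obj A)).hom =
      (β_ (F.obj X) A).hom ≫ lprojR G F adj₁ adj₂ A X := by
  unfold rprojR lprojR
  erw [Category.assoc, inducedFrobData_lax_braiding,
    ← BraidedCategory.braiding_naturality_right_assoc]
  rfl

lemma braiding_lprojL (X : D) (A : C) :
    F.map (β_ X (G.obj A)).hom ≫ lprojL G F adj₁ adj₂ A X =
      rprojL G F adj₁ adj₂ X A ≫ (β_ (F.obj X) A).hom := by
  unfold rprojL lprojL
  erw [← Category.assoc, inducedFrobData_braiding_oplax, Category.assoc,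
    ← BraidedCategory.braiding_naturality_right]
  exact (Category.assoc _ _ _).symm

end

/-- if `G` is a braided strong monoidal functor between braided monoidal
categories, part of an ambiadjunction `F ⊣ G ⊣ F` with induced lax and oplax structures
on `F`, and the right projection formula morphisms are mutual inverses, then the left
projection formula morphisms are also mutual inverses. -/
theorem left_projection_formulas_mutually_inverse_of_right_in_braided_context
    [BraidedCategory C] [BraidedCategory D]
    (G : C ⥤ D) [G.Monoidal] (F : D ⥤ C) (adj₁ : F ⊣ G) (adj₂ : G ⊣ F)
    (hbraided : ∀ A B : C,
      μ G A B ≫ G.map (β_ A B).hom = (β_ (G.obj A) (G.obj B)).hom ≫ μ G B A)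
    (h₁ : ∀ (X : D) (A : C),
      rprojR G F adj₁ adj₂ X A ≫ rprojL G F adj₁ adj₂ X A = 𝟙 (F.obj X ⊗ A))
    (h₂ : ∀ (X : D) (A : C),
      rprojL G F adj₁ adj₂ X A ≫ rprojR G F adj₁ adj₂ X A = 𝟙 (F.obj (X ⊗ G.obj A))) :
    (∀ (A : C) (X : D),
      lprojR G F adj₁ adj₂ A X ≫ lprojL G F adj₁ adj₂ A X = 𝟙 (A ⊗ F.obj X)) ∧
    (∀ (A : C) (X : D),
      lprojL G F adj₁ adj₂ A X ≫ lprojR G F adj₁ adj₂ A X = 𝟙 (F.obj (G.obj A ⊗ X))) := by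
  let _ : G.Braided := { braided := hbraided }
  exact ⟨fun A X => comp_eq_id_of_iso_squares (β_ (F.obj X) A) (F.mapIso (β_ X (G.obj A)))
      (rprojR_braiding G F adj₁ adj₂ X A) (braiding_lprojL G F adj₁ adj₂ X A) (h₁ X A),
    fun A X => comp_eq_id_of_iso_squares (F.mapIso (β_ X (G.obj A))) (β_ (F.obj X) A)
      (braiding_lprojL G F adj₁ adj₂ X A).symm (rprojR_braiding G F adj₁ adj₂ X A).symm
      (h₂ X A)⟩
end

section
/- Let φ : K → H be an algebra map between k-algebras such that H is finitely generated projective as a left K-module, and suppose there is a K-K-bimodule map tr : H → K such that θ : H → Hom_K(H, K), θ(h) = (g ↦ tr(g h)), is bijective (a Frobenius morphism). Then the induction functor Ind_φ = H ⊗_K (−) : Mod_K ⥤ Mod_H and the coinduction functor CoInd_φ = Hom_K(H, −) : Mod_K ⥤ Mod_H are naturally isomorphic, via θ_V : H ⊗_K V → Hom_K(H, V), θ_V(h ⊗ v) = (g ↦ tr(g h) • v). -/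
open scoped TensorProduct

section

variable {k K H : Type*} [CommRing k] [CommRing K] [Ring H] [Algebra k K] [Algebra k H]
variable (φ : K →ₐ[k] H)

/- We regard `H` as a right `K`-module via `φ` (encoded as a `K`-module structure with
`a • h = h * φ a`, which commutes with left multiplication by `H`), so that
`Ind_φ V = H ⊗[K] V` is defined and is a left `H`-module. -/
variable [Module K H] [SMulCommClass K H H]

/-- The comparison map `θ_V : H ⊗[K] V → Hom_K(H, V)`,
`θ_V (h ⊗ v) = (g ↦ tr (g h) • v)`, induced by a Frobenius morphism `tr`. -/
noncomputable def theta (tr : H →+ K)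
    (hsmul : ∀ (a : K) (h : H), a • h = h * φ a)
    (htrr : ∀ (a : K) (h : H), tr (h * φ a) = tr h * a)
    (V : Type*) [AddCommGroup V] [Module K V] :
    H ⊗[K] V →+ (H → V) :=
  TensorProduct.liftAddHom
    { toFun := fun h =>
        { toFun := fun v => fun g => tr (g * h) • v
          map_zero' := by funext g; simp
          map_add' := by intro v w; funext g; simp [smul_add] }
      map_zero' := by ext v; simp
      map_add' := by intro h h'; ext v; simp [mul_add, add_smul] }
    (by
      intro a h v
      funext g
      show tr (g * (a • h)) • v = tr (g * h) • (a • v)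
      rw [hsmul, ← mul_assoc, htrr, smul_smul])

/-- let `φ : K → H` be an algebra map such that `H` is finitely generated
projective as a left `K`-module, and let `tr : H → K` be a `K`-`K`-bimodule map which is
a Frobenius morphism (i.e. `θ : H → Hom_K(H,K)`, `θ(h) = tr((−)h)`, is bijective). Then
the induction functor `Ind_φ = H ⊗_K (−)` and the coinduction functor
`CoInd_φ = Hom_K(H, −)` are naturally isomorphic via the maps `θ_V`: each `θ_V` is
bijective (onto the left `K`-linear maps, here realised as a bijection after `H` acts),
is `H`-linear for the `H`-actions `h' • (h ⊗ v) = (h'h) ⊗ v` and `(h' • f)(g) = f(g h')`,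
and is natural in `V`. -/
theorem induction_naturally_isomorphic_to_coinduction
    (tr : H →+ K)
    (hsmul : ∀ (a : K) (h : H), a • h = h * φ a)
    (htrl : ∀ (a : K) (h : H), tr (φ a * h) = a * tr h)
    (htrr : ∀ (a : K) (h : H), tr (h * φ a) = tr h * a)
    -- `H` is finitely generated projective as a left `K`-module (dual basis criterion)
    (hfgp : ∃ (n : ℕ) (b : Fin n → H) (c : Fin n → (H →+ K)),
      (∀ (i : Fin n) (a : K) (h : H), c i (φ a * h) = a * c i h) ∧
      (∀ h : H, h = ∑ i, φ (c i h) * b i))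
    -- `θ_K` is bijective onto the left `K`-linear maps, i.e. `tr` is a Frobenius morphism
    (hinj : ∀ h h' : H, (∀ g : H, tr (g * h) = tr (g * h')) → h = h')
    (hsurj : ∀ f : H →+ K, (∀ (a : K) (h : H), f (φ a * h) = a * f h) →
      ∃ h₀ : H, ∀ g : H, f g = tr (g * h₀)) :
    ∀ (V : Type*) [AddCommGroup V] [Module K V],
      -- `θ_V` maps `Ind_φ V` bijectively onto its image `CoInd_φ V`
      Function.Injective (theta φ tr hsmul htrr V) ∧
      -- the image of `θ_V` consists exactly of the left `K`-linear maps `H → V`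
      (∀ t : H ⊗[K] V, ∀ (a : K) (g : H),
        theta φ tr hsmul htrr V t (φ a * g) = a • theta φ tr hsmul htrr V t g) ∧
      (∀ f : H → V,
        (∀ g g' : H, f (g + g') = f g + f g') →
        (∀ (a : K) (g : H), f (φ a * g) = a • f g) →
        ∃ t : H ⊗[K] V, theta φ tr hsmul htrr V t = f) ∧
      -- `θ_V` is `H`-linear
      (∀ (h' : H) (t : H ⊗[K] V) (g : H),
        theta φ tr hsmul htrr V (h' • t) g = theta φ tr hsmul htrr V t (g * h')) ∧
      -- `θ` is natural in `V`
      (∀ (W : Type*) [AddCommGroup W] [Module K W] (f : V →ₗ[K] W) (t : H ⊗[K] V) (g : H),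
        theta φ tr hsmul htrr W (TensorProduct.map LinearMap.id f t) g =
          f (theta φ tr hsmul htrr V t g)) := by
  intro V _ _
  obtain ⟨n, b, c, hc, hbc⟩ := hfgp
  choose d hd using fun i => hsurj (c i) (hc i)
  have theta_tmul : ∀ (h : H) (v : V) (g : H),
      theta φ tr hsmul htrr V (h ⊗ₜ v) g = tr (g * h) • v := by
    intro h v g
    simp [theta]
  -- retraction on pure tensors
  have key : ∀ (h : H) (v : V),
      (∑ i, d i ⊗ₜ[K] (theta φ tr hsmul htrr V (h ⊗ₜ v) (b i))) = h ⊗ₜ v := by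
    intro h v
    have h1 : ∀ i, d i ⊗ₜ[K] (theta φ tr hsmul htrr V (h ⊗ₜ v) (b i))
        = (tr (b i * h) • d i) ⊗ₜ[K] v := by
      intro i
      rw [theta_tmul, TensorProduct.tmul_smul, TensorProduct.smul_tmul']
    have hsum : (∑ i, tr (b i * h) • d i) = h := by
      apply hinj
      intro g
      have : ∀ i, tr (g * (tr (b i * h) • d i)) = tr (φ (c i g) * (b i * h)) := by
        intro i
        rw [hsmul, ← mul_assoc, htrr, ← hd, htrl]
      calc tr (g * ∑ i, tr (b i * h) • d i)
          = ∑ i, tr (g * (tr (b i * h) • d i)) := by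
            rw [Finset.mul_sum, map_sum]
        _ = ∑ i, tr (φ (c i g) * (b i * h)) := by
            exact Finset.sum_congr rfl fun i _ => this i
        _ = tr ((∑ i, φ (c i g) * b i) * h) := by
            rw [Finset.sum_mul, map_sum]
            exact Finset.sum_congr rfl fun i _ => by rw [mul_assoc]
        _ = tr (g * h) := by rw [← hbc g]
    calc (∑ i, d i ⊗ₜ[K] (theta φ tr hsmul htrr V (h ⊗ₜ v) (b i)))
        = ∑ i, (tr (b i * h) • d i) ⊗ₜ[K] v := Finset.sum_congr rfl fun i _ => h1 i
      _ = (∑ i, tr (b i * h) • d i) ⊗ₜ[K] v := by rw [TensorProduct.sum_tmul]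
      _ = h ⊗ₜ v := by rw [hsum]
  have retr : ∀ t : H ⊗[K] V,
      (∑ i, d i ⊗ₜ[K] (theta φ tr hsmul htrr V t (b i))) = t := by
    intro t
    induction t using TensorProduct.induction_on with
    | zero => simp
    | tmul h v => exact key h v
    | add x y hx hy =>
      rw [map_add]
      simp only [Pi.add_apply, TensorProduct.tmul_add, Finset.sum_add_distrib, hx, hy]
  refine ⟨?_, ?_, ?_, ?_, ?_⟩
  · intro t t' h
    rw [← retr t, ← retr t', h]
  · intro t a g
    induction t using TensorProduct.induction_on with
    | zero => simp
    | tmul h v =>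
      rw [theta_tmul, theta_tmul, mul_assoc, htrl, mul_smul]
    | add x y hx hy =>
      simp only [map_add, Pi.add_apply, hx, hy, smul_add]
  · intro f hadd hlin
    refine ⟨∑ i, d i ⊗ₜ[K] f (b i), ?_⟩
    funext g
    have hF : theta φ tr hsmul htrr V (∑ i, d i ⊗ₜ[K] f (b i)) g
        = ∑ i, tr (g * d i) • f (b i) := by
      rw [map_sum]
      rw [Finset.sum_apply]
      exact Finset.sum_congr rfl fun i _ => theta_tmul _ _ _
    let F : H →+ V := AddMonoidHom.mk' f hadd
    have hFf : ∀ x, F x = f x := fun _ => rfl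
    calc theta φ tr hsmul htrr V (∑ i, d i ⊗ₜ[K] f (b i)) g
        = ∑ i, tr (g * d i) • f (b i) := hF
      _ = ∑ i, f (φ (c i g) * b i) := by
          exact Finset.sum_congr rfl fun i _ => by rw [← hd, hlin]
      _ = ∑ i, F (φ (c i g) * b i) :=
          Finset.sum_congr rfl fun i _ => (hFf _).symm
      _ = F (∑ i, φ (c i g) * b i) := (map_sum F _ _).symm
      _ = f g := by rw [← hbc g, hFf]
  · intro h' t g
    induction t using TensorProduct.induction_on with
    | zero => simp
    | tmul h v =>
      rw [TensorProduct.smul_tmul', smul_eq_mul, theta_tmul, theta_tmul, mul_assoc]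
    | add x y hx hy =>
      simp only [smul_add, map_add, Pi.add_apply, hx, hy]
  · intro W _ _ f t g
    induction t using TensorProduct.induction_on with
    | zero => simp
    | tmul h v =>
      simp only [TensorProduct.map_tmul, LinearMap.id_coe, id_eq]
      have : theta φ tr hsmul htrr W (h ⊗ₜ[K] f v) g = tr (g * h) • f v := by
        simp [theta]
      rw [this, theta_tmul, map_smul]
    | add x y hx hy =>
      simp only [map_add, Pi.add_apply, hx, hy]

end
end

section
/- Let φ : K → H be a ring map such that H admits a Frobenius morphism tr : H → K (a K-K-bimodule map with h ↦ tr((−)h) bijective onto Hom_K(H,K)). Then the map c ↦ (h ↦ tr(h c)) is a bijection from the set of units c of H commuting with the image of K (i.e., c φ(x) = φ(x) c for all x ∈ K) onto the set of all Frobenius morphisms H → K. -/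
variable {K H : Type*} [Ring K] [Ring H]

/-- A `K`-`K`-bimodule map `H → K`, where `H` is a `K`-`K`-bimodule via the ring map
`φ : K → H` and multiplication: an additive map satisfying
`tr (φ a * h * φ b) = a * tr h * b`. -/
def IsBimoduleMap (φ : K →+* H) (tr : H → K) : Prop :=
  (∀ h g : H, tr (h + g) = tr h + tr g) ∧
  (∀ (a b : K) (h : H), tr (φ a * h * φ b) = a * tr h * b)

/-- A map `f : H → K` is left `K`-linear (for the left `K`-action via `φ`). -/
def IsLeftKLinear (φ : K →+* H) (f : H → K) : Prop :=
  (∀ h g : H, f (h + g) = f h + f g) ∧ (∀ (a : K) (h : H), f (φ a * h) = a * f h)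

/-- A Frobenius morphism for `φ : K → H` is a `K`-`K`-bimodule map `tr : H → K` such
that `θ : H → Hom_K(H, K)`, `θ(h) = tr((−) * h)`, is a bijection onto the left
`K`-linear maps. -/
def IsFrobeniusMorphism (φ : K →+* H) (tr : H → K) : Prop :=
  IsBimoduleMap φ tr ∧
  (∀ h h' : H, (∀ g : H, tr (g * h) = tr (g * h')) → h = h') ∧
  (∀ f : H → K, IsLeftKLinear φ f → ∃ h : H, ∀ g : H, f g = tr (g * h))

/-- if `tr` is a Frobenius morphism for `φ : K → H`, then
`c ↦ tr((−) * c)` is a bijection from the units of `H` commuting with the image of `K`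
onto the set of all Frobenius morphisms `H → K`. -/
theorem units_commuting_with_K_biject_with_frobenius_morphisms
    (φ : K →+* H) (tr : H → K) (htr : IsFrobeniusMorphism φ tr) :
    -- the map lands in Frobenius morphisms
    (∀ c : H, IsUnit c → (∀ x : K, c * φ x = φ x * c) →
      IsFrobeniusMorphism φ (fun h => tr (h * c))) ∧
    -- injectivity
    (∀ c c' : H, IsUnit c → (∀ x : K, c * φ x = φ x * c) →
      IsUnit c' → (∀ x : K, c' * φ x = φ x * c') →
      (fun h => tr (h * c)) = (fun h => tr (h * c')) → c = c') ∧
    -- surjectivity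
    (∀ t : H → K, IsFrobeniusMorphism φ t →
      ∃ c : H, IsUnit c ∧ (∀ x : K, c * φ x = φ x * c) ∧ t = fun h => tr (h * c)) := by
  obtain ⟨⟨tadd, tbim⟩, tinj, tsurj⟩ := htr
  refine ⟨?_, ?_, ?_⟩
  · intro c hc hcomm
    obtain ⟨u, rfl⟩ := hc
    refine ⟨⟨fun h g => by dsimp only; rw [add_mul, tadd], fun a b h => by
        dsimp only
        rw [show φ a * h * φ b * ↑u = φ a * (h * ↑u) * φ b by
          rw [mul_assoc (φ a * h), ← hcomm b, ← mul_assoc, ← mul_assoc], tbim]⟩,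
      fun h h' hhh => ?_, fun f hf => ?_⟩
    · have h1 := tinj (h * ↑u) (h' * ↑u)
        (fun g => by rw [← mul_assoc, ← mul_assoc]; exact hhh g)
      calc h = h * ↑u * ↑u⁻¹ := by rw [u.mul_inv_cancel_right]
        _ = h' * ↑u * ↑u⁻¹ := by rw [h1]
        _ = h' := by rw [u.mul_inv_cancel_right]
    · obtain ⟨h, hh⟩ := tsurj f hf
      exact ⟨h * ↑u⁻¹, fun g => by
        dsimp only; rw [hh g, ← mul_assoc, u.inv_mul_cancel_right]⟩
  · intro c c' _ _ _ _ heq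
    exact tinj c c' fun g => congrFun heq g
  · rintro t ⟨⟨sadd, sbim⟩, sinj, ssurj⟩
    have hlin : IsLeftKLinear φ t :=
      ⟨sadd, fun a h => by have := sbim a 1 h; simpa using this⟩
    obtain ⟨c, hc⟩ := tsurj t hlin
    have hcomm : ∀ x : K, c * φ x = φ x * c := by
      intro x
      refine tinj _ _ fun g => ?_
      have e1 : tr (g * (c * φ x)) = tr (g * c) * x := by
        have := tbim 1 x (g * c)
        simpa [mul_assoc] using this
      have e2 : t (g * φ x) = t g * x := by
        have := sbim 1 x g
        simpa using this
      rw [e1, ← mul_assoc, ← hc (g * φ x), e2, hc g]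
    have hlin' : IsLeftKLinear φ tr :=
      ⟨tadd, fun a h => by have := tbim a 1 h; simpa using this⟩
    obtain ⟨d, hd⟩ := ssurj tr hlin'
    have hdc : d * c = 1 := by
      refine tinj _ _ fun g => ?_
      rw [mul_one, ← mul_assoc, ← hc (g * d), ← hd g]
    have hcd : c * d = 1 := by
      refine sinj _ _ fun g => ?_
      rw [mul_one, ← mul_assoc, hc (g * c * d), mul_assoc (g * c), hdc, mul_one, ← hc g]
    exact ⟨c, ⟨⟨c, d, hcd, hdc⟩, rfl⟩, hcomm, funext fun g => hc g⟩
end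

section
/- Let ε be a primitive ℓ-th root of unity (ℓ > 1) in a field k, let T = T_ℓ(ε) be the Taft algebra k⟨g, x⟩/(g^ℓ = 1, x^ℓ = 0, g x = ε x g), and let K = k[g] ≅ k C_ℓ be the group-algebra Hopf subalgebra. Then any K-K-bimodule map tr : T → K satisfies tr(x^i) = 0 for all 1 ≤ i ≤ ℓ−1; consequently tr((−)·x) = 0 and no K-K-bimodule map tr : T → K can induce a bijection T → Hom_K(T, K), h ↦ tr((−)h). Hence induction and coinduction along K ↪ T are not isomorphic. -/
variable {k : Type*} [Field k]

/-- The defining relations of the Taft algebra `T_ℓ(ε)`: `g^ℓ = 1`, `x^ℓ = 0` and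
`g x = ε x g`, where `g` and `x` are the two generators. -/
inductive TaftRel (k : Type*) [Field k] (ε : k) (ℓ : ℕ) :
    FreeAlgebra k (Fin 2) → FreeAlgebra k (Fin 2) → Prop
  | g_pow : TaftRel k ε ℓ ((FreeAlgebra.ι k (0 : Fin 2)) ^ ℓ) 1
  | x_pow : TaftRel k ε ℓ ((FreeAlgebra.ι k (1 : Fin 2)) ^ ℓ) 0
  | comm : TaftRel k ε ℓ (FreeAlgebra.ι k (0 : Fin 2) * FreeAlgebra.ι k (1 : Fin 2))
      (ε • (FreeAlgebra.ι k (1 : Fin 2) * FreeAlgebra.ι k (0 : Fin 2)))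

/-- The Taft algebra `T_ℓ(ε) = k⟨g, x⟩/(g^ℓ = 1, x^ℓ = 0, g x = ε x g)`. -/
abbrev Taft (k : Type*) [Field k] (ε : k) (ℓ : ℕ) := RingQuot (TaftRel k ε ℓ)

/-- The grouplike generator `g` of the Taft algebra. -/
noncomputable def Taft.g (ε : k) (ℓ : ℕ) : Taft k ε ℓ :=
  RingQuot.mkRingHom (TaftRel k ε ℓ) (FreeAlgebra.ι k (0 : Fin 2))

/-- The skew-primitive generator `x` of the Taft algebra. -/
noncomputable def Taft.x (ε : k) (ℓ : ℕ) : Taft k ε ℓ :=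
  RingQuot.mkRingHom (TaftRel k ε ℓ) (FreeAlgebra.ι k (1 : Fin 2))

/-- The group-algebra subalgebra `K = k[g] ≅ k C_ℓ` of the Taft algebra. -/
noncomputable def Taft.K (ε : k) (ℓ : ℕ) : Subalgebra k (Taft k ε ℓ) :=
  Algebra.adjoin k {Taft.g ε ℓ}

/-!
Because `K = k[g]` is commutative and `g x^i = ε^i x^i g`, a bimodule map satisfies
`g · tr(x^i) = tr(g x^i) = ε^i tr(x^i) · g = ε^i g · tr(x^i)`; as `g` is a unit and `ε^i ≠ 1` for
`0 < i < ℓ`, this forces `tr(x^i) = 0`. The elements `h` with `tr(h x^j) = 0` for all `j ≥ 1` then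
form a subspace containing `1` and stable under right multiplication by `g` and `x`, hence all of
`T`. So `tr((−) x) = 0 = tr((−) 0)` although `x ≠ 0` (it acts nontrivially in the 2-dimensional
representation `g ↦ diag(1, ε)`, `x ↦ E₁₀`), and `h ↦ tr((−) h)` is not injective.
-/

section Biequivariant

variable {A : Type*} [Ring A] [Algebra k A] {B : Subalgebra k A}

def IsBiequivariant (tr : A → B) : Prop :=
  ∀ (a b : B) (h : A), tr (↑a * h * ↑b) = a * tr h * b

namespace IsBiequivariant

variable {tr : A → B}

theorem map_mul_left (htr : IsBiequivariant tr) (a : B) (h : A) : tr (↑a * h) = a * tr h := by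
  simpa using htr a 1 h

theorem map_mul_right (htr : IsBiequivariant tr) (b : B) (h : A) : tr (h * ↑b) = tr h * b := by
  simpa using htr 1 b h

theorem map_smul (htr : IsBiequivariant tr) (c : k) (h : A) : tr (c • h) = c • tr h := by
  simpa [Algebra.smul_def] using htr.map_mul_left (algebraMap k B c) h

theorem map_zero (htr : IsBiequivariant tr) : tr 0 = 0 := by
  simpa using htr.map_smul 0 0

theorem map_eq_zero_of_mul_eq_smul_mul (htr : IsBiequivariant tr) {u : B} (hu : IsUnit u)
    {c : k} (hc : c ≠ 1) {h : A} (hcomm : Commute (u : A) (tr h)) (huh : ↑u * h = c • (h * ↑u)) :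
    tr h = 0 := by
  have hskew : u * tr h = c • (tr h * u) := by
    rw [← htr.map_mul_left, huh, htr.map_smul, htr.map_mul_right]
  have hsub : (1 - c) • (tr h * u) = 0 := by
    rw [sub_smul, one_smul, ← hskew, sub_eq_zero]
    exact Subtype.ext hcomm.eq.symm
  exact hu.mul_left_eq_zero.1 ((smul_eq_zero.1 hsub).resolve_left (sub_ne_zero.2 hc.symm))

end IsBiequivariant

end Biequivariant

namespace Taft

variable {ε : k} {ℓ : ℕ}

theorem g_eq_mkAlgHom :
    g ε ℓ = RingQuot.mkAlgHom k (TaftRel k ε ℓ) (FreeAlgebra.ι k 0) := by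
  rw [g, ← RingQuot.mkAlgHom_coe k]; rfl

theorem x_eq_mkAlgHom :
    x ε ℓ = RingQuot.mkAlgHom k (TaftRel k ε ℓ) (FreeAlgebra.ι k 1) := by
  rw [x, ← RingQuot.mkAlgHom_coe k]; rfl

theorem g_pow_eq_one : g ε ℓ ^ ℓ = 1 := by
  rw [g_eq_mkAlgHom, ← map_pow, RingQuot.mkAlgHom_rel k TaftRel.g_pow, map_one]

theorem x_pow_eq_zero : x ε ℓ ^ ℓ = 0 := by
  rw [x_eq_mkAlgHom, ← map_pow, RingQuot.mkAlgHom_rel k TaftRel.x_pow, map_zero]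

theorem g_mul_x : g ε ℓ * x ε ℓ = ε • (x ε ℓ * g ε ℓ) := by
  rw [g_eq_mkAlgHom, x_eq_mkAlgHom, ← map_mul, ← map_mul, ← map_smul,
    RingQuot.mkAlgHom_rel k TaftRel.comm]

theorem g_mul_x_pow (i : ℕ) : g ε ℓ * x ε ℓ ^ i = ε ^ i • (x ε ℓ ^ i * g ε ℓ) := by
  induction i with
  | zero => simp
  | succ i ih =>
    rw [pow_succ', ← mul_assoc, g_mul_x, smul_mul_assoc, mul_assoc, ih, mul_smul_comm,
      smul_smul, ← mul_assoc, ← pow_succ', ← pow_succ']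

section lift

variable {A : Type*} [Ring A] [Algebra k A] (G X : A) (hG : G ^ ℓ = 1) (hX : X ^ ℓ = 0)
  (hGX : G * X = ε • (X * G))

noncomputable def lift : Taft k ε ℓ →ₐ[k] A :=
  RingQuot.liftAlgHom k ⟨FreeAlgebra.lift k ![G, X], fun _ _ r => by
    cases r <;> simp [hG, hX, hGX]⟩

theorem lift_x : lift G X hG hX hGX (x ε ℓ) = X := by
  simp [lift, x_eq_mkAlgHom]

end lift

theorem x_ne_zero (hℓ : 1 < ℓ) (hε : ε ^ ℓ = 1) : x ε ℓ ≠ 0 := by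
  classical
  let G : Matrix (Fin 2) (Fin 2) k := Matrix.diagonal ![1, ε]
  let X : Matrix (Fin 2) (Fin 2) k := Matrix.single 1 0 1
  have hG : G ^ ℓ = 1 := by
    rw [Matrix.diagonal_pow, ← Matrix.diagonal_one]
    congr 1
    funext i
    fin_cases i <;> simp [hε]
  have hX : X ^ ℓ = 0 :=
    pow_eq_zero_of_le hℓ (by rw [sq, Matrix.single_mul_single_of_ne _ _ _ _ zero_ne_one])
  have hGX : G * X = ε • (X * G) := by
    ext i j
    fin_cases i <;> fin_cases j <;> simp [G, X, Matrix.mul_apply, Matrix.single]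
  intro h0
  have hX0 := lift_x G X hG hX hGX
  rw [h0, map_zero] at hX0
  simpa [X] using congrFun (congrFun hX0 1) 0


theorem eq_top_of_mul_g_mem_of_mul_x_mem {M : Submodule k (Taft k ε ℓ)} (h1 : 1 ∈ M)
    (hg : ∀ a ∈ M, a * g ε ℓ ∈ M) (hx : ∀ a ∈ M, a * x ε ℓ ∈ M) : M = ⊤ := by
  have hmul : ∀ z : FreeAlgebra k (Fin 2), ∀ a ∈ M, a * RingQuot.mkAlgHom k _ z ∈ M := by
    intro z
    induction z using FreeAlgebra.induction with
    | grade0 r =>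
      intro a ha
      rw [AlgHom.commutes, ← Algebra.commutes, ← Algebra.smul_def]
      exact M.smul_mem r ha
    | grade1 i =>
      fin_cases i
      · simpa [← g_eq_mkAlgHom] using hg
      · simpa [← x_eq_mkAlgHom] using hx
    | mul z₁ z₂ h₁ h₂ =>
      intro a ha
      rw [map_mul, ← mul_assoc]
      exact h₂ _ (h₁ a ha)
    | add z₁ z₂ h₁ h₂ =>
      intro a ha
      rw [map_add, mul_add]
      exact M.add_mem (h₁ a ha) (h₂ a ha)
  refine Submodule.eq_top_iff'.2 fun h => ?_
  obtain ⟨z, rfl⟩ := RingQuot.mkAlgHom_surjective k _ h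
  simpa using hmul z 1 h1

theorem g_mem_K : g ε ℓ ∈ K ε ℓ :=
  Algebra.self_mem_adjoin_singleton k _

theorem isUnit_g_K (hℓ : ℓ ≠ 0) : IsUnit (⟨g ε ℓ, g_mem_K⟩ : K ε ℓ) :=
  IsUnit.of_pow_eq_one (Subtype.ext (by simp [g_pow_eq_one])) hℓ

variable {tr : Taft k ε ℓ → K ε ℓ}

theorem map_x_pow_eq_zero (htr : IsBiequivariant tr) (hε : IsPrimitiveRoot ε ℓ) {i : ℕ}
    (hi₀ : i ≠ 0) (hiℓ : i < ℓ) : tr (x ε ℓ ^ i) = 0 :=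
  htr.map_eq_zero_of_mul_eq_smul_mul (isUnit_g_K (by omega))
    (hε.pow_ne_one_of_pos_of_lt hi₀ hiℓ) (Algebra.commute_of_mem_adjoin_self (tr _).2)
    (g_mul_x_pow i)

theorem map_mul_x_eq_zero (htr : IsBiequivariant tr) (hadd : ∀ h h', tr (h + h') = tr h + tr h')
    (hε : IsPrimitiveRoot ε ℓ) (h : Taft k ε ℓ) : tr (h * x ε ℓ) = 0 := by
  have hx_pow : ∀ j, tr (x ε ℓ ^ (j + 1)) = 0 := by
    intro j
    rcases lt_or_ge (j + 1) ℓ with hj | hj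
    · exact map_x_pow_eq_zero htr hε j.succ_ne_zero hj
    · rw [pow_eq_zero_of_le hj x_pow_eq_zero, htr.map_zero]
  let M : Submodule k (Taft k ε ℓ) :=
    { carrier := {a | ∀ j, tr (a * x ε ℓ ^ (j + 1)) = 0}
      add_mem' := fun ha hb j => by rw [add_mul, hadd, ha j, hb j, add_zero]
      zero_mem' := fun j => by rw [zero_mul, htr.map_zero]
      smul_mem' := fun c a ha j => by rw [smul_mul_assoc, htr.map_smul, ha j, smul_zero] }
  have hM : M = ⊤ := by
    refine eq_top_of_mul_g_mem_of_mul_x_mem (fun j => by simpa using hx_pow j) ?_ ?_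
    · intro a ha j
      have hg : a * g ε ℓ * x ε ℓ ^ (j + 1) = ε ^ (j + 1) • (a * x ε ℓ ^ (j + 1) * g ε ℓ) := by
        rw [mul_assoc, g_mul_x_pow, mul_smul_comm, ← mul_assoc]
      rw [hg, htr.map_smul, htr.map_mul_right ⟨g ε ℓ, g_mem_K⟩, ha j, zero_mul, smul_zero]
    · intro a ha j
      simpa [mul_assoc, ← pow_succ'] using ha (j + 1)
  simpa using (hM ▸ Submodule.mem_top : h ∈ M) 0

end Taft

/-- for a primitive `ℓ`-th root of unity `ε` (`ℓ > 1`), any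
`K`-`K`-bimodule map `tr : T_ℓ(ε) → K = k[g]` kills `x^i` for `1 ≤ i ≤ ℓ - 1`;
consequently `tr ((−) * x) = 0`, and no `K`-`K`-bimodule map can induce a bijection
`T → Hom_K(T, K)`, `h ↦ tr ((−) * h)` (i.e. there is no Frobenius morphism). -/
theorem taft_has_no_frobenius_morphism_over_group_algebra
    (ε : k) (ℓ : ℕ) (hℓ : 1 < ℓ) (hε : IsPrimitiveRoot ε ℓ)
    (tr : Taft k ε ℓ → Taft.K ε ℓ)
    (hadd : ∀ h h' : Taft k ε ℓ, tr (h + h') = tr h + tr h')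
    (hbimod : ∀ (a b : Taft.K ε ℓ) (h : Taft k ε ℓ), tr (↑a * h * ↑b) = a * tr h * b) :
    (∀ i : ℕ, 1 ≤ i → i ≤ ℓ - 1 → tr (Taft.x ε ℓ ^ i) = 0) ∧
    (∀ h : Taft k ε ℓ, tr (h * Taft.x ε ℓ) = 0) ∧
    ¬ ((∀ h₁ h₂ : Taft k ε ℓ,
          (∀ g' : Taft k ε ℓ, tr (g' * h₁) = tr (g' * h₂)) → h₁ = h₂) ∧
        (∀ f : Taft k ε ℓ → Taft.K ε ℓ,
          ((∀ h h', f (h + h') = f h + f h') ∧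
            (∀ (a : Taft.K ε ℓ) (h), f (↑a * h) = a * f h)) →
          ∃ h₀ : Taft k ε ℓ, ∀ g' : Taft k ε ℓ, f g' = tr (g' * h₀))) := by
  have htr : IsBiequivariant tr := hbimod
  have hmul_x := Taft.map_mul_x_eq_zero htr hadd hε
  refine ⟨fun i hi₁ hiℓ => Taft.map_x_pow_eq_zero htr hε (by omega) (by omega), hmul_x, ?_⟩
  rintro ⟨hinj, -⟩
  refine Taft.x_ne_zero hℓ hε.pow_eq_one (hinj _ 0 fun g' => ?_)
  rw [hmul_x, mul_zero, htr.map_zero]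
end
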